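/- arXiv:1702.00471 — 6 statements merged into one kernel-verified Lean document; each statement's English description precedes it below -/
import Mathlib

section
/- Let p/r ∈ (0,1) be a rational number with positive integers p < r and gcd(p,r) = 1. Then p/r admits a terminating Cantor series representation with respect to the base sequence (q_k) — i.e., there exist n ≥ 1 and digits ε_1, …, ε_n with 0 ≤ ε_i ≤ q_i − 1 for each i and ε_n ≥ 1 such that p/r = Σ_{i=1}^n ε_i/(q_1 q_2 ⋯ q_i) (equivalently, p/r has two different Cantor series representations) — if and only if there exists a positive integer n₀ such that r divides the product q_1 q_2 ⋯ q_{n₀}. -/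
lemma cantor_aux_rep (q : ℕ → ℕ) :
    ∀ n m : ℕ, m < ∏ j ∈ Finset.Icc 1 n, q j →
    ∃ ε : ℕ → ℕ, (∀ i, 1 ≤ i → i ≤ n → ε i ≤ q i - 1) ∧
      m = ∑ i ∈ Finset.Icc 1 n, ε i * ∏ j ∈ Finset.Icc (i+1) n, q j := by
  intro n
  induction n with
  | zero =>
    intro m hm
    simp at hm
    exact ⟨fun _ => 0, by omega, by simp [hm]⟩
  | succ n ih =>
    intro m hm
    rw [Finset.prod_Icc_succ_top (by omega)] at hm
    have hqpos : 0 < q (n+1) := by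
      rcases Nat.eq_zero_or_pos (q (n+1)) with h | h
      · simp [h] at hm
      · exact h
    have hdiv : m / q (n+1) < ∏ j ∈ Finset.Icc 1 n, q j :=
      Nat.div_lt_of_lt_mul (by rwa [mul_comm] at hm)
    obtain ⟨ε, hε, hsum⟩ := ih (m / q (n+1)) hdiv
    refine ⟨fun i => if i = n+1 then m % q (n+1) else ε i, ?_, ?_⟩
    · intro i h1 h2
      by_cases h : i = n+1
      · simp [h]
        have := Nat.mod_lt m hqpos
        omega
      · simp [h]
        exact hε i h1 (by omega)
    · rw [Finset.sum_Icc_succ_top (by omega)]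
      simp only [if_pos rfl]
      have hterm : ∀ i ∈ Finset.Icc 1 n,
          (if i = n+1 then m % q (n+1) else ε i) * ∏ j ∈ Finset.Icc (i+1) (n+1), q j
          = (ε i * ∏ j ∈ Finset.Icc (i+1) n, q j) * q (n+1) := by
        intro i hi
        simp only [Finset.mem_Icc] at hi
        rw [if_neg (by omega), Finset.prod_Icc_succ_top (by omega)]
        ring
      rw [Finset.sum_congr rfl hterm, ← Finset.sum_mul, ← hsum]
      simp
      rw [mul_comm]
      exact (Nat.div_add_mod m (q (n+1))).symm

lemma cantor_prod_split {M : Type*} [CommMonoid M] (f : ℕ → M) {i n : ℕ} (h2 : i ≤ n) :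
    ∏ j ∈ Finset.Icc 1 n, f j
      = (∏ j ∈ Finset.Icc 1 i, f j) * ∏ j ∈ Finset.Icc (i+1) n, f j := by
  rw [show Finset.Icc 1 n = Finset.Ioc 0 n from Finset.Icc_add_one_left_eq_Ioc 0 n,
    show Finset.Icc 1 i = Finset.Ioc 0 i from Finset.Icc_add_one_left_eq_Ioc 0 i,
    Finset.Icc_add_one_left_eq_Ioc]
  exact (Finset.prod_Ioc_consecutive f (Nat.zero_le i) h2).symm

/-- A rational `p/r ∈ (0,1)` in lowest terms admits a terminating Cantor
series representation with respect to the base sequence `(q_k)` iff `r` divides some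
partial product `q_1 q_2 ⋯ q_{n₀}`. -/
theorem cantor_terminating_iff_divides
    (q : ℕ → ℕ) (hq : ∀ k, 1 ≤ k → 2 ≤ q k)
    (p r : ℕ) (hp : 0 < p) (hpr : p < r) (hcop : Nat.Coprime p r) :
    (∃ n : ℕ, 1 ≤ n ∧ ∃ ε : ℕ → ℕ,
        (∀ i, 1 ≤ i → i ≤ n → ε i ≤ q i - 1) ∧ 1 ≤ ε n ∧
        (p : ℝ) / r = ∑ i ∈ Finset.Icc 1 n,
          (ε i : ℝ) / ∏ j ∈ Finset.Icc 1 i, (q j : ℝ)) ↔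
    (∃ n₀ : ℕ, 1 ≤ n₀ ∧ r ∣ ∏ j ∈ Finset.Icc 1 n₀, q j) := by
  constructor
  · rintro ⟨n, hn, ε, hle, hεn, hsum⟩
    refine ⟨n, hn, ?_⟩

    have hrpos : 0 < r := hp.trans hpr
    have hQipos : ∀ i : ℕ, 1 ≤ i → (0:ℝ) < ∏ j ∈ Finset.Icc 1 i, (q j : ℝ) := by
      intro i _
      apply Finset.prod_pos
      intro j hj
      have := hq j (Finset.mem_Icc.mp hj).1
      positivity
    set N : ℕ := ∑ i ∈ Finset.Icc 1 n, ε i * ∏ j ∈ Finset.Icc (i+1) n, q j with hN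
    have key : (p : ℝ) * ∏ j ∈ Finset.Icc 1 n, (q j : ℝ) = (N : ℝ) * r := by
      have h1 : (p : ℝ) = (∑ i ∈ Finset.Icc 1 n,
          (ε i : ℝ) / ∏ j ∈ Finset.Icc 1 i, (q j : ℝ)) * r := by
        field_simp at hsum
        linarith [hsum]
      rw [h1, Finset.sum_mul, Finset.sum_mul, hN]
      push_cast
      rw [Finset.sum_mul]
      apply Finset.sum_congr rfl
      intro i hi
      obtain ⟨hi1, hi2⟩ := Finset.mem_Icc.mp hi
      rw [cantor_prod_split (fun j => (q j : ℝ)) hi2]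
      have h0 := (hQipos i hi1).ne'
      field_simp
    have hnat : p * ∏ j ∈ Finset.Icc 1 n, q j = N * r := by
      exact_mod_cast key
    have hdvd : r ∣ p * ∏ j ∈ Finset.Icc 1 n, q j := ⟨N, by rw [hnat, mul_comm]⟩
    exact (Nat.Coprime.dvd_of_dvd_mul_left (hcop.symm) hdvd)
  · rintro ⟨n₀, hn₀, hdvd⟩

    have hrpos : 0 < r := hp.trans hpr
    set Q : ℕ := ∏ j ∈ Finset.Icc 1 n₀, q j with hQdef
    have hQpos : 0 < Q := by
      apply Finset.prod_pos
      intro j hj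
      have := hq j (Finset.mem_Icc.mp hj).1
      omega
    obtain ⟨c, hc⟩ := hdvd
    have hcpos : 0 < c := by
      rcases Nat.eq_zero_or_pos c with h | h
      · rw [h, mul_zero] at hc; omega
      · exact h
    set m : ℕ := p * c with hmdef
    have hmr : m * r = p * Q := by rw [hc]; ring
    have hm1 : 1 ≤ m := Nat.one_le_iff_ne_zero.mpr (by positivity)
    have hmQ : m < Q := by
      have h2 : m * r < Q * r := by nlinarith [hmr, hQpos, hpr]
      exact Nat.lt_of_mul_lt_mul_right h2
    obtain ⟨ε, hε, hsum⟩ := cantor_aux_rep q n₀ m hmQ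
    set S : Finset ℕ := (Finset.Icc 1 n₀).filter (fun i => ε i ≠ 0) with hSdef
    have hS : S.Nonempty := by
      rw [Finset.filter_nonempty_iff]
      by_contra h
      push_neg at h
      have : m = 0 := by
        rw [hsum]
        apply Finset.sum_eq_zero
        intro i hi
        rw [h i hi]
        simp
      omega
    set n : ℕ := S.max' hS with hndef
    have hnS : n ∈ S := S.max'_mem hS
    rw [hSdef, Finset.mem_filter, Finset.mem_Icc] at hnS
    obtain ⟨⟨hn1, hn2⟩, hnε⟩ := hnS
    have hεzero : ∀ i, n < i → i ≤ n₀ → ε i = 0 := by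
      intro i hni hin
      by_contra h
      have : i ∈ S := by
        rw [hSdef, Finset.mem_filter, Finset.mem_Icc]
        exact ⟨⟨by omega, hin⟩, h⟩
      have := S.le_max' i this
      omega
    have hQipos : ∀ i : ℕ, (0:ℝ) < ∏ j ∈ Finset.Icc 1 i, (q j : ℝ) := by
      intro i
      apply Finset.prod_pos
      intro j hj
      have := hq j (Finset.mem_Icc.mp hj).1
      positivity
    refine ⟨n, hn1, ε, fun i h1 h2 => hε i h1 (by omega), by omega, ?_⟩
    -- p/r = m/Q
    have hQR : (0:ℝ) < (Q : ℝ) := by exact_mod_cast hQpos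
    have step1 : (p : ℝ) / r = (m : ℝ) / Q := by
      rw [div_eq_div_iff (by exact_mod_cast hrpos.ne') hQR.ne']
      exact_mod_cast congrArg (Nat.cast : ℕ → ℝ) hmr.symm
    have step2 : (m : ℝ) / Q = ∑ i ∈ Finset.Icc 1 n₀,
        (ε i : ℝ) / ∏ j ∈ Finset.Icc 1 i, (q j : ℝ) := by
      have hm : (m : ℝ) = ∑ i ∈ Finset.Icc 1 n₀,
          (ε i : ℝ) * ∏ j ∈ Finset.Icc (i+1) n₀, (q j : ℝ) := by
        rw [hsum]; push_cast; rfl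
      have hQcast : (Q : ℝ) = ∏ j ∈ Finset.Icc 1 n₀, (q j : ℝ) := by
        rw [hQdef]; push_cast; rfl
      rw [hm, Finset.sum_div]
      apply Finset.sum_congr rfl
      intro i hi
      obtain ⟨hi1, hi2⟩ := Finset.mem_Icc.mp hi
      have hsplit : (Q : ℝ) = (∏ j ∈ Finset.Icc 1 i, (q j : ℝ))
          * ∏ j ∈ Finset.Icc (i+1) n₀, (q j : ℝ) := by
        rw [hQcast]; exact cantor_prod_split _ hi2
      have h1 : (∏ j ∈ Finset.Icc 1 i, (q j : ℝ)) ≠ 0 := (hQipos i).ne'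
      have h2 : (∏ j ∈ Finset.Icc (i+1) n₀, (q j : ℝ)) ≠ 0 := by
        apply Finset.prod_ne_zero_iff.mpr
        intro j hj
        have := hq j (by have := (Finset.mem_Icc.mp hj).1; omega)
        positivity
      rw [hsplit]
      rw [mul_comm (∏ j ∈ Finset.Icc 1 i, (q j : ℝ)) _, ← div_div,
        mul_div_assoc, div_self h2, mul_one]
    rw [step1, step2]
    refine (Finset.sum_subset (Finset.Icc_subset_Icc_right hn2) ?_).symm
    intro i hi hni
    rw [Finset.mem_Icc] at hi
    rw [Finset.mem_Icc] at hni
    rw [hεzero i (by omega) hi.2]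
    simp
end

section
/- The number x = Σ_{k=1}^∞ ε_k/(q_1 q_2 ⋯ q_k) is rational if and only if there exist an integer n ≥ 0 and a positive integer m such that σ^n(x) = σ^{n+m}(x). -/
/-- The `n`-th shift `σ^n(x) = Σ_{k=n+1}^∞ ε_k/(q_{n+1} q_{n+2} ⋯ q_k)` of the Cantor
series with bases `q` and digits `ε`; in particular `σ^0(x) = x` is the Cantor series
value itself. -/
noncomputable def cantorShift (q ε : ℕ → ℕ) (n : ℕ) : ℝ :=
  ∑' k : ℕ, (ε (n + k + 1) : ℝ) / ∏ i ∈ Finset.Icc (n + 1) (n + k + 1), (q i : ℝ)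

/-!
The shifts satisfy `σ^{n+1} = q_{n+1} σ^n - ε_{n+1}`, hence `σ^{n+m} = Q σ^n - t` with
`Q = q_{n+1} ⋯ q_{n+m}` and `t ∈ ℤ`. If `x = a/d`, every `σ^n` is therefore of the form `c/d`
with `c ∈ ℤ`; as `0 ≤ σ^n ≤ 1` there are only finitely many such values, so two shifts coincide.
Conversely `σ^n = σ^{n+m}` gives `(Q - 1) σ^n = t` with `Q ≥ 2`, so `σ^n`, and then `x`, is
rational.
-/

open Finset

lemma exists_lt_eq_of_forall_eq_intCast_div {f : ℕ → ℝ} {d : ℕ} (hd : 0 < d)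
    (hf : ∀ n, f n ∈ Set.Icc 0 1) (hfd : ∀ n, ∃ c : ℤ, f n = c / d) :
    ∃ i j, i < j ∧ f i = f j := by
  have hd' : (0 : ℝ) < d := by exact_mod_cast hd
  have hfin := (Set.finite_Icc (0 : ℤ) d).image fun c : ℤ ↦ (c : ℝ) / d
  refine hfin.exists_lt_map_eq_of_forall_mem fun n ↦ ?_
  obtain ⟨c, hc⟩ := hfd n
  obtain ⟨h0, h1⟩ := hf n
  rw [hc, le_div_iff₀ hd', zero_mul] at h0
  rw [hc, div_le_one hd'] at h1
  exact ⟨c, ⟨by exact_mod_cast h0, by exact_mod_cast h1⟩, hc.symm⟩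

namespace CantorSeries

variable {q ε : ℕ → ℕ} (hq : ∀ k, 1 ≤ k → 2 ≤ q k) (hε : ∀ k, 1 ≤ k → ε k ≤ q k - 1)
include hq

lemma prod_Icc_pos (n k : ℕ) : 0 < ∏ i ∈ Icc (n + 1) (n + k), (q i : ℝ) :=
  prod_pos fun i hi ↦ by have := hq i (by grind); positivity

lemma cantorShift_term_nonneg (n k : ℕ) :
    0 ≤ (ε (n + k + 1) : ℝ) / ∏ i ∈ Icc (n + 1) (n + k + 1), (q i : ℝ) := by
  have := prod_Icc_pos hq n (k + 1)
  positivity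

lemma cantorShift_nonneg (n : ℕ) : 0 ≤ cantorShift q ε n :=
  tsum_nonneg (cantorShift_term_nonneg hq n)

include hε

lemma digit_le_sub_one {k : ℕ} (hk : 1 ≤ k) : (ε k : ℝ) ≤ q k - 1 := by
  have := hε k hk
  have := hq k hk
  rw [le_sub_iff_add_le]
  exact_mod_cast (by omega : ε k + 1 ≤ q k)

/-- With `P = q_{n+1} ⋯ q_{n+N}`, the bound `ε ≤ q - 1` gives `ε / (P q) ≤ 1 / P - 1 / (P q)`,
so the partial sums telescope. -/
lemma sum_range_le_one_sub (n N : ℕ) :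
    ∑ k ∈ range N, (ε (n + k + 1) : ℝ) / ∏ i ∈ Icc (n + 1) (n + k + 1), (q i : ℝ)
      ≤ 1 - 1 / ∏ i ∈ Icc (n + 1) (n + N), (q i : ℝ) := by
  induction N with
  | zero => simp
  | succ N ih =>
    set P := ∏ i ∈ Icc (n + 1) (n + N), (q i : ℝ)
    have hP : 0 < P := prod_Icc_pos hq n N
    have hq0 : (q (n + N + 1) : ℝ) ≠ 0 := by have := hq (n + N + 1) (by omega); positivity
    have hsplit : ∏ i ∈ Icc (n + 1) (n + N + 1), (q i : ℝ) = P * q (n + N + 1) :=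
      prod_Icc_succ_top (by omega) _
    have hdigit : (ε (n + N + 1) : ℝ) / (P * q (n + N + 1))
        ≤ 1 / P - 1 / (P * q (n + N + 1)) := by
      calc (ε (n + N + 1) : ℝ) / (P * q (n + N + 1))
          ≤ (q (n + N + 1) - 1) / (P * q (n + N + 1)) :=
            div_le_div_of_nonneg_right (digit_le_sub_one hq hε (by omega)) (by positivity)
        _ = 1 / P - 1 / (P * q (n + N + 1)) := by field_simp
    rw [sum_range_succ, ← add_assoc, hsplit]
    linarith

lemma sum_range_le_one (n N : ℕ) :
    ∑ k ∈ range N, (ε (n + k + 1) : ℝ) / ∏ i ∈ Icc (n + 1) (n + k + 1), (q i : ℝ) ≤ 1 := by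
  have := prod_Icc_pos hq n N
  have := sum_range_le_one_sub hq hε n N
  have : 0 < 1 / ∏ i ∈ Icc (n + 1) (n + N), (q i : ℝ) := by positivity
  linarith

lemma summable_cantorShift_term (n : ℕ) :
    Summable fun k ↦ (ε (n + k + 1) : ℝ) / ∏ i ∈ Icc (n + 1) (n + k + 1), (q i : ℝ) :=
  summable_of_sum_range_le (cantorShift_term_nonneg hq n) (sum_range_le_one hq hε n)

lemma cantorShift_le_one (n : ℕ) : cantorShift q ε n ≤ 1 :=
  Real.tsum_le_of_sum_range_le (cantorShift_term_nonneg hq n) (sum_range_le_one hq hε n)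

lemma cantorShift_succ (n : ℕ) :
    cantorShift q ε (n + 1) = q (n + 1) * cantorShift q ε n - ε (n + 1) := by
  have hq0 : (q (n + 1) : ℝ) ≠ 0 := by have := hq (n + 1) (by omega); positivity
  have hshift (k : ℕ) :
      (ε (n + (k + 1) + 1) : ℝ) / ∏ i ∈ Icc (n + 1) (n + (k + 1) + 1), (q i : ℝ)
        = (ε (n + 1 + k + 1) : ℝ) / (∏ i ∈ Icc (n + 1 + 1) (n + 1 + k + 1), (q i : ℝ))
          / q (n + 1) := by
    rw [← mul_prod_Ioc_eq_prod_Icc (by omega), ← Icc_add_one_left_eq_Ioc, div_div,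
      show n + (k + 1) + 1 = n + 1 + k + 1 by omega, mul_comm (q (n + 1) : ℝ)]
  unfold cantorShift
  rw [(summable_cantorShift_term hq hε n).tsum_eq_zero_add, tsum_congr hshift, tsum_div_const]
  simp only [add_zero, Icc_self, prod_singleton]
  field_simp
  ring

lemma exists_cantorShift_add_eq_prod_mul_sub (n m : ℕ) : ∃ t : ℤ,
    cantorShift q ε (n + m) = (∏ i ∈ Icc (n + 1) (n + m), q i : ℕ) * cantorShift q ε n - t := by
  induction m with
  | zero => exact ⟨0, by simp⟩
  | succ m ih =>
    obtain ⟨t, ht⟩ := ih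
    refine ⟨q (n + m + 1) * t + ε (n + m + 1), ?_⟩
    rw [← add_assoc, cantorShift_succ hq hε, ht, prod_Icc_succ_top (by omega)]
    push_cast
    ring

lemma exists_rat_cantorShift_of_eq {n m : ℕ} (hm : 0 < m)
    (h : cantorShift q ε n = cantorShift q ε (n + m)) : ∃ a : ℚ, cantorShift q ε n = a := by
  obtain ⟨t, ht⟩ := exists_cantorShift_add_eq_prod_mul_sub hq hε n m
  set Q := ∏ i ∈ Icc (n + 1) (n + m), q i
  have hQ : 2 ≤ Q := (hq (n + 1) le_add_self).trans <|
    single_le_prod' (fun i hi ↦ by have := hq i (by grind); omega) (by grind)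
  have hQ' : (Q : ℝ) - 1 ≠ 0 := by
    have : (2 : ℝ) ≤ Q := by exact_mod_cast hQ
    linarith
  refine ⟨t / (Q - 1), ?_⟩
  push_cast
  rw [eq_div_iff hQ']
  linarith

lemma exists_rat_cantorShift_zero_of_exists_rat {n : ℕ} (h : ∃ a : ℚ, cantorShift q ε n = a) :
    ∃ a : ℚ, cantorShift q ε 0 = a := by
  obtain ⟨a, ha⟩ := h
  obtain ⟨t, ht⟩ := exists_cantorShift_add_eq_prod_mul_sub hq hε 0 n
  simp only [zero_add] at ht
  set P := ∏ i ∈ Icc 1 n, q i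
  have hP : (P : ℝ) ≠ 0 := by
    have := prod_Icc_pos hq 0 n
    simp only [zero_add] at this
    push_cast [P]
    exact this.ne'
  refine ⟨(a + t) / P, ?_⟩
  push_cast
  rw [eq_div_iff hP]
  linarith

lemma exists_int_cantorShift_eq_div_den {a : ℚ} (ha : cantorShift q ε 0 = a) (n : ℕ) :
    ∃ c : ℤ, cantorShift q ε n = c / a.den := by
  obtain ⟨t, ht⟩ := exists_cantorShift_add_eq_prod_mul_sub hq hε 0 n
  refine ⟨(∏ i ∈ Icc 1 n, q i : ℕ) * a.num - t * a.den, ?_⟩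
  rw [zero_add] at ht
  rw [ht, ha, Rat.cast_def]
  push_cast
  field_simp

end CantorSeries

open CantorSeries

/-- `x = Σ_{k=1}^∞ ε_k/(q_1 ⋯ q_k)` is rational iff there are `n ≥ 0`
and `m ≥ 1` with `σ^n(x) = σ^{n+m}(x)`. -/
theorem cantor_rational_iff_shift_eq
    (q : ℕ → ℕ) (hq : ∀ k, 1 ≤ k → 2 ≤ q k)
    (ε : ℕ → ℕ) (hε : ∀ k, 1 ≤ k → ε k ≤ q k - 1)
    (x : ℝ) (hx : x = cantorShift q ε 0) :
    (∃ a : ℚ, x = (a : ℝ)) ↔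
    (∃ n m : ℕ, 0 < m ∧ cantorShift q ε n = cantorShift q ε (n + m)) := by
  subst hx
  constructor
  · rintro ⟨a, ha⟩
    obtain ⟨i, j, hij, h⟩ := exists_lt_eq_of_forall_eq_intCast_div a.den_pos
      (fun n ↦ ⟨cantorShift_nonneg hq n, cantorShift_le_one hq hε n⟩)
      (exists_int_cantorShift_eq_div_den hq hε ha)
    exact ⟨i, j - i, by omega, by rwa [Nat.add_sub_cancel' hij.le]⟩
  · rintro ⟨n, m, hm, h⟩
    exact exists_rat_cantorShift_zero_of_exists_rat hq hε (exists_rat_cantorShift_of_eq hq hε hm h)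
end

section
/- Suppose there exist an integer n ≥ 0 and a positive integer m such that σ^n(x) = σ^{n+m}(x). Then x is rational, and moreover, writing P = q_{n+1} q_{n+2} ⋯ q_{n+m}, one has σ^n(x) = (P/(P − 1)) · Σ_{k=n+1}^{n+m} ε_k/(q_{n+1} q_{n+2} ⋯ q_k). -/
open Finset

theorem prod_Icc_mul_prod_Icc {M : Type*} [CommMonoid M] (f : ℕ → M) {a b c : ℕ}
    (hab : a ≤ b) (hbc : b ≤ c) :
    (∏ i ∈ Icc (a + 1) b, f i) * ∏ i ∈ Icc (b + 1) c, f i = ∏ i ∈ Icc (a + 1) c, f i := by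
  simp only [Icc_add_one_left_eq_Ioc]
  exact prod_Ioc_consecutive f hab hbc

theorem sum_Icc_eq_sum_range {M : Type*} [AddCommMonoid M] (f : ℕ → M) (n m : ℕ) :
    ∑ k ∈ Icc (n + 1) (n + m), f k = ∑ k ∈ range m, f (n + k + 1) := by
  rw [← Ico_add_one_right_eq_Icc, sum_Ico_eq_sum_range, show n + m + 1 - (n + 1) = m by omega]
  exact sum_congr rfl fun k _ => by rw [add_right_comm]

theorem prod_Icc_natCast_mem (K : Subfield ℝ) (q : ℕ → ℕ) (a b : ℕ) :
    ∏ i ∈ Icc (a + 1) b, (q i : ℝ) ∈ K :=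
  K.prod_mem fun i _ => natCast_mem K (q i)

theorem sum_Icc_div_prod_Icc_mem (K : Subfield ℝ) (q ε : ℕ → ℕ) (a b : ℕ) :
    ∑ k ∈ Icc (a + 1) b, (ε k : ℝ) / ∏ i ∈ Icc (a + 1) k, (q i : ℝ) ∈ K :=
  K.sum_mem fun k _ => K.div_mem (natCast_mem K (ε k)) (prod_Icc_natCast_mem K q a k)

section CantorSeries

variable {q ε : ℕ → ℕ} (hq : ∀ k, 1 ≤ k → 2 ≤ q k)
include hq

theorem two_pow_le_prod_Icc (a b : ℕ) : (2 : ℝ) ^ (b - a) ≤ ∏ i ∈ Icc (a + 1) b, (q i : ℝ) := by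
  rw [show b - a = #(Icc (a + 1) b) by rw [Nat.card_Icc]; omega, ← prod_const]
  refine prod_le_prod (fun _ _ => zero_le_two) fun i hi => ?_
  exact_mod_cast hq i (le_add_self.trans (mem_Icc.mp hi).1)

theorem prod_Icc_pos (a b : ℕ) : 0 < ∏ i ∈ Icc (a + 1) b, (q i : ℝ) :=
  (pow_pos two_pos _).trans_le (two_pow_le_prod_Icc hq a b)

theorem one_lt_prod_Icc {a b : ℕ} (hab : a < b) : 1 < ∏ i ∈ Icc (a + 1) b, (q i : ℝ) :=
  (one_lt_pow₀ one_lt_two (by omega)).trans_le (two_pow_le_prod_Icc hq a b)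

variable (hε : ∀ k, 1 ≤ k → ε k ≤ q k - 1)
include hε

theorem cantorShift_term_le (n k : ℕ) :
    (ε (n + k + 1) : ℝ) / ∏ i ∈ Icc (n + 1) (n + k + 1), (q i : ℝ) ≤ (1 / 2) ^ k := by
  set Q := ∏ i ∈ Icc (n + 1) (n + k), (q i : ℝ)
  have hQ : (2 : ℝ) ^ k ≤ Q := by simpa using two_pow_le_prod_Icc hq n (n + k)
  have hqpos : (0 : ℝ) < q (n + k + 1) :=
    Nat.cast_pos.mpr (two_pos.trans_le (hq (n + k + 1) (by omega)))
  have hεq : (ε (n + k + 1) : ℝ) ≤ q (n + k + 1) := by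
    exact_mod_cast (hε (n + k + 1) (by omega)).trans (Nat.sub_le _ _)
  have hsplit : ∏ i ∈ Icc (n + 1) (n + k + 1), (q i : ℝ) = Q * q (n + k + 1) := by
    simpa using (prod_Icc_mul_prod_Icc (fun i => (q i : ℝ)) (Nat.le_add_right n k)
      (Nat.le_succ (n + k))).symm
  calc (ε (n + k + 1) : ℝ) / ∏ i ∈ Icc (n + 1) (n + k + 1), (q i : ℝ)
      ≤ q (n + k + 1) / (Q * q (n + k + 1)) := by
        rw [hsplit]; gcongr
    _ = 1 / Q := by field_simp
    _ ≤ 1 / 2 ^ k := by gcongr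
    _ = (1 / 2) ^ k := by rw [div_pow, one_pow]

theorem summable_cantorShift_term (n : ℕ) :
    Summable fun k : ℕ => (ε (n + k + 1) : ℝ) / ∏ i ∈ Icc (n + 1) (n + k + 1), (q i : ℝ) :=
  .of_nonneg_of_le (fun k => div_nonneg (Nat.cast_nonneg _) (prod_Icc_pos hq _ _).le)
    (cantorShift_term_le hq hε n) (summable_geometric_of_lt_one (by norm_num) (by norm_num))

theorem cantorShift_eq_sum_add_shift (n m : ℕ) :
    cantorShift q ε n =
      ∑ k ∈ Icc (n + 1) (n + m), (ε k : ℝ) / ∏ i ∈ Icc (n + 1) k, (q i : ℝ) +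
        cantorShift q ε (n + m) / ∏ i ∈ Icc (n + 1) (n + m), (q i : ℝ) := by
  rw [cantorShift, ← (summable_cantorShift_term hq hε n).sum_add_tsum_nat_add m,
    sum_Icc_eq_sum_range, cantorShift, ← tsum_div_const]
  refine congrArg _ (tsum_congr fun k => ?_)
  rw [show n + (k + m) + 1 = n + m + k + 1 by ring,
    ← prod_Icc_mul_prod_Icc _ (Nat.le_add_right n m) (by omega : n + m ≤ n + m + k + 1),
    div_mul_eq_div_div_swap]

theorem cantorShift_eq_of_eq_shift {n m : ℕ} (hm : 0 < m)
    (heq : cantorShift q ε n = cantorShift q ε (n + m)) :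
    cantorShift q ε n =
      ((∏ i ∈ Icc (n + 1) (n + m), (q i : ℝ)) / ((∏ i ∈ Icc (n + 1) (n + m), (q i : ℝ)) - 1)) *
        ∑ k ∈ Icc (n + 1) (n + m), (ε k : ℝ) / ∏ i ∈ Icc (n + 1) k, (q i : ℝ) := by
  have hrec := cantorShift_eq_sum_add_shift hq hε n m
  rw [← heq] at hrec
  have hP := one_lt_prod_Icc hq (by omega : n < n + m)
  have hP1 : (∏ i ∈ Icc (n + 1) (n + m), (q i : ℝ)) - 1 ≠ 0 := sub_ne_zero.mpr hP.ne'
  field_simp at hrec ⊢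
  linarith

theorem cantorShift_mem_of_eq_shift (K : Subfield ℝ) {n m : ℕ} (hm : 0 < m)
    (heq : cantorShift q ε n = cantorShift q ε (n + m)) : cantorShift q ε n ∈ K := by
  rw [cantorShift_eq_of_eq_shift hq hε hm heq]
  have hP := prod_Icc_natCast_mem K q n (n + m)
  exact K.mul_mem (K.div_mem hP (K.sub_mem hP K.one_mem)) (sum_Icc_div_prod_Icc_mem K q ε n (n + m))

theorem cantorShift_zero_mem_of_mem (K : Subfield ℝ) {n : ℕ} (hn : cantorShift q ε n ∈ K) :
    cantorShift q ε 0 ∈ K := by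
  have hsplit := cantorShift_eq_sum_add_shift hq hε 0 n
  rw [zero_add n] at hsplit
  rw [hsplit]
  exact K.add_mem (sum_Icc_div_prod_Icc_mem K q ε 0 n)
    (K.div_mem hn (prod_Icc_natCast_mem K q 0 n))

end CantorSeries

/-- if `σ^n(x) = σ^{n+m}(x)` for some `n ≥ 0`, `m ≥ 1`, then `x` is
rational and, with `P = q_{n+1} ⋯ q_{n+m}`,
`σ^n(x) = (P/(P-1)) · Σ_{k=n+1}^{n+m} ε_k/(q_{n+1} ⋯ q_k)`. -/
theorem cantor_shift_eq_imp_rational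
    (q : ℕ → ℕ) (hq : ∀ k, 1 ≤ k → 2 ≤ q k)
    (ε : ℕ → ℕ) (hε : ∀ k, 1 ≤ k → ε k ≤ q k - 1)
    (x : ℝ) (hx : x = cantorShift q ε 0)
    (n m : ℕ) (hm : 0 < m)
    (heq : cantorShift q ε n = cantorShift q ε (n + m)) :
    (∃ a : ℚ, x = (a : ℝ)) ∧
    cantorShift q ε n =
      ((∏ i ∈ Finset.Icc (n + 1) (n + m), (q i : ℝ)) /
        ((∏ i ∈ Finset.Icc (n + 1) (n + m), (q i : ℝ)) - 1)) *
      ∑ k ∈ Finset.Icc (n + 1) (n + m),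
        (ε k : ℝ) / ∏ i ∈ Finset.Icc (n + 1) k, (q i : ℝ) := by
  refine ⟨?_, cantorShift_eq_of_eq_shift hq hε hm heq⟩
  obtain ⟨a, ha⟩ := RingHom.mem_fieldRange.mp <|
    cantorShift_zero_mem_of_mem hq hε (Rat.castHom ℝ).fieldRange
      (cantorShift_mem_of_eq_shift hq hε _ hm heq)
  exact ⟨a, hx.trans ha.symm⟩
end

section
/- The number x = Σ_{k=1}^∞ ε_k/(q_1 q_2 ⋯ q_k) is rational if and only if there exist an integer n ≥ 0 and a positive integer m such that the tail sums satisfy Σ_{k=n+1}^∞ ε_k/(q_1 q_2 ⋯ q_k) = (q_{n+1} q_{n+2} ⋯ q_{n+m}) · Σ_{k=n+m+1}^∞ ε_k/(q_1 q_2 ⋯ q_k). -/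
/-!
Write `D n = q₁ ⋯ qₙ` and `xₙ = D n · Σ_{k>n} εₖ/(q₁ ⋯ qₖ)`. Digits below the base give
`0 ≤ xₙ ≤ 1`, and `x_{n+1} = q_{n+1} xₙ - ε_{n+1}`, so `xₙ = D n · x - Nₙ` with `Nₙ ∈ ℤ`; the
condition of the theorem says exactly `xₙ = x_{n+m}`. If `x = a/b`, then all `xₙ` lie in the finite
set `(1/b)ℤ ∩ [0, 1]`, so two of them coincide. Conversely `xₙ = x_{n+m} = Q xₙ - N` with
`Q = q_{n+1} ⋯ q_{n+m} ≥ 2` makes `xₙ = N/(Q - 1)` rational, and hence `x = (xₙ + Nₙ)/D n` too.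
-/

/-- The tail sum `Σ_{k=n+1}^∞ ε_k/(q_1 q_2 ⋯ q_k)` of the Cantor series with bases `q`
and digits `ε`; the full Cantor series value is the tail at `n = 0`. -/
noncomputable def cantorTail (q ε : ℕ → ℕ) (n : ℕ) : ℝ :=
  ∑' k : ℕ, (ε (n + k + 1) : ℝ) / ∏ i ∈ Finset.Icc 1 (n + k + 1), (q i : ℝ)

lemma exists_lt_eq_of_natCast_mul_eq_intCast {f : ℕ → ℝ} {d : ℕ} (hd : 0 < d)
    (hf : ∀ n, f n ∈ Set.Icc 0 1) (hint : ∀ n, ∃ z : ℤ, d * f n = z) :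
    ∃ n₁ n₂, n₁ < n₂ ∧ f n₁ = f n₂ := by
  choose z hz using hint
  have hmem (n : ℕ) : z n ∈ Set.Icc (0 : ℤ) d := by
    have h0 : (0 : ℝ) ≤ z n := hz n ▸ mul_nonneg d.cast_nonneg (hf n).1
    have h1 : (z n : ℝ) ≤ d := hz n ▸ mul_le_of_le_one_right d.cast_nonneg (hf n).2
    exact ⟨by exact_mod_cast h0, by exact_mod_cast h1⟩
  obtain ⟨n₁, n₂, hlt, heq⟩ := Set.Finite.exists_lt_map_eq_of_forall_mem hmem (Set.finite_Icc _ _)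
  have hd' : (d : ℝ) ≠ 0 := by exact_mod_cast hd.ne'
  exact ⟨n₁, n₂, hlt, mul_left_cancel₀ hd' (by rw [hz, hz, heq])⟩

namespace CantorSeries

open Finset

def denom (q : ℕ → ℕ) (n : ℕ) : ℕ := ∏ i ∈ Icc 1 n, q i

noncomputable def scaledTail (q ε : ℕ → ℕ) (n : ℕ) : ℝ := denom q n * cantorTail q ε n

variable {q ε : ℕ → ℕ}

lemma denom_succ (n : ℕ) : denom q (n + 1) = denom q n * q (n + 1) :=
  prod_Icc_succ_top (by omega) q

lemma denom_add (n m : ℕ) : denom q (n + m) = denom q n * ∏ i ∈ Icc (n + 1) (n + m), q i := by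
  have h := prod_Ioc_consecutive q (Nat.zero_le n) (Nat.le_add_right n m)
  simp only [← Icc_add_one_left_eq_Ioc, zero_add] at h
  exact h.symm

lemma denom_pos (hq : ∀ k, 1 ≤ k → 0 < q k) (n : ℕ) : 0 < denom q n :=
  prod_pos fun i hi => hq i (mem_Icc.1 hi).1

lemma cantorTail_eq (n : ℕ) :
    cantorTail q ε n = ∑' k, (ε (n + k + 1) : ℝ) / denom q (n + k + 1) := by
  simp [cantorTail, denom]

lemma cantorTail_nonneg (n : ℕ) : 0 ≤ cantorTail q ε n := by
  rw [cantorTail_eq]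
  exact tsum_nonneg fun _ => by positivity

lemma pos_of_digit_lt (hε : ∀ k, 1 ≤ k → ε k < q k) : ∀ k, 1 ≤ k → 0 < q k :=
  fun k hk => (Nat.zero_le _).trans_lt (hε k hk)

section Digits

variable (hε : ∀ k, 1 ≤ k → ε k < q k)
include hε

lemma div_denom_le_sub (n : ℕ) :
    (ε (n + 1) : ℝ) / denom q (n + 1) ≤ 1 / denom q n - 1 / denom q (n + 1) := by
  have hD : (0 : ℝ) < denom q n := by exact_mod_cast denom_pos (pos_of_digit_lt hε) n
  have hdigit : (ε (n + 1) : ℝ) + 1 ≤ q (n + 1) := by exact_mod_cast hε (n + 1) (by omega)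
  have hqpos : (0 : ℝ) < q (n + 1) := by linarith [(ε (n + 1)).cast_nonneg (α := ℝ)]
  have hsub : 1 / (denom q n : ℝ) - 1 / (denom q n * q (n + 1))
      = (q (n + 1) - 1) / (denom q n * q (n + 1)) := by
    field_simp
  rw [denom_succ, Nat.cast_mul, hsub]
  gcongr
  linarith

lemma sum_range_div_denom_le (n K : ℕ) :
    ∑ k ∈ range K, (ε (n + k + 1) : ℝ) / denom q (n + k + 1) ≤ 1 / denom q n := by
  have hD : (0 : ℝ) < denom q (n + K) := by exact_mod_cast denom_pos (pos_of_digit_lt hε) _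
  calc ∑ k ∈ range K, (ε (n + k + 1) : ℝ) / denom q (n + k + 1)
      ≤ ∑ k ∈ range K, (1 / (denom q (n + k) : ℝ) - 1 / denom q (n + (k + 1))) :=
        sum_le_sum fun k _ => div_denom_le_sub hε (n + k)
    _ = 1 / denom q n - 1 / denom q (n + K) :=
        sum_range_sub' (fun k => 1 / (denom q (n + k) : ℝ)) K
    _ ≤ 1 / denom q n := sub_le_self _ (by positivity)

lemma summable_div_denom (n : ℕ) :
    Summable fun k => (ε (n + k + 1) : ℝ) / denom q (n + k + 1) :=
  summable_of_sum_range_le (fun _ => by positivity) (sum_range_div_denom_le hε n)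

lemma cantorTail_le (n : ℕ) : cantorTail q ε n ≤ 1 / denom q n := by
  rw [cantorTail_eq]
  exact Real.tsum_le_of_sum_range_le (fun _ => by positivity) (sum_range_div_denom_le hε n)

lemma cantorTail_eq_add (n : ℕ) :
    cantorTail q ε n = (ε (n + 1) : ℝ) / denom q (n + 1) + cantorTail q ε (n + 1) := by
  rw [cantorTail_eq, cantorTail_eq, (summable_div_denom hε n).tsum_eq_zero_add]
  simp only [add_zero, Nat.add_right_comm n, add_assoc]

lemma scaledTail_mem_Icc (n : ℕ) : scaledTail q ε n ∈ Set.Icc 0 1 := by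
  have hD : (0 : ℝ) < denom q n := by exact_mod_cast denom_pos (pos_of_digit_lt hε) n
  refine ⟨mul_nonneg hD.le (cantorTail_nonneg n), ?_⟩
  calc scaledTail q ε n = denom q n * cantorTail q ε n := rfl
    _ ≤ denom q n * (1 / denom q n) := mul_le_mul_of_nonneg_left (cantorTail_le hε n) hD.le
    _ = 1 := mul_one_div_cancel hD.ne'

lemma scaledTail_succ (n : ℕ) :
    scaledTail q ε (n + 1) = q (n + 1) * scaledTail q ε n - ε (n + 1) := by
  have hD : (denom q n : ℝ) ≠ 0 := by exact_mod_cast (denom_pos (pos_of_digit_lt hε) n).ne'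
  have hq0 : (q (n + 1) : ℝ) ≠ 0 := by exact_mod_cast (pos_of_digit_lt hε (n + 1) (by omega)).ne'
  rw [scaledTail, scaledTail, cantorTail_eq_add hε n, denom_succ]
  push_cast
  field_simp
  ring

lemma scaledTail_add (n m : ℕ) : ∃ N : ℤ,
    scaledTail q ε (n + m) = (∏ i ∈ Icc (n + 1) (n + m), q i : ℕ) * scaledTail q ε n - N := by
  induction m with
  | zero => exact ⟨0, by simp⟩
  | succ m ih =>
    obtain ⟨N, hN⟩ := ih
    refine ⟨q (n + m + 1) * N + ε (n + m + 1), ?_⟩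
    rw [← add_assoc, scaledTail_succ hε, hN, prod_Icc_succ_top (by omega)]
    push_cast
    ring

lemma scaledTail_eq_denom_mul_sub_int (n : ℕ) :
    ∃ N : ℤ, scaledTail q ε n = denom q n * cantorTail q ε 0 - N := by
  simpa [scaledTail, denom] using scaledTail_add hε 0 n

lemma exists_lt_scaledTail_eq_of_eq_ratCast {a : ℚ} (ha : cantorTail q ε 0 = a) :
    ∃ n₁ n₂, n₁ < n₂ ∧ scaledTail q ε n₁ = scaledTail q ε n₂ := by
  refine exists_lt_eq_of_natCast_mul_eq_intCast a.den_pos (scaledTail_mem_Icc hε) fun n => ?_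
  obtain ⟨N, hN⟩ := scaledTail_eq_denom_mul_sub_int hε n
  have hnum : (a.den : ℝ) * a = a.num := by exact_mod_cast a.den_mul_eq_num
  refine ⟨denom q n * a.num - a.den * N, ?_⟩
  rw [hN, ha]
  push_cast
  linear_combination (denom q n : ℝ) * hnum

end Digits

lemma cantorTail_eq_prod_mul_iff (hq : ∀ k, 1 ≤ k → 0 < q k) (n m : ℕ) :
    cantorTail q ε n = (∏ i ∈ Icc (n + 1) (n + m), (q i : ℝ)) * cantorTail q ε (n + m) ↔
      scaledTail q ε n = scaledTail q ε (n + m) := by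
  have hD : (denom q n : ℝ) ≠ 0 := by exact_mod_cast (denom_pos hq n).ne'
  rw [scaledTail, scaledTail, denom_add, Nat.cast_mul, Nat.cast_prod, mul_assoc,
    mul_right_inj' hD]

lemma exists_ratCast_eq_of_scaledTail_eq (hq : ∀ k, 1 ≤ k → 2 ≤ q k)
    (hε : ∀ k, 1 ≤ k → ε k < q k) {n m : ℕ} (hm : 0 < m)
    (h : scaledTail q ε n = scaledTail q ε (n + m)) : ∃ a : ℚ, cantorTail q ε 0 = a := by
  obtain ⟨N, hN⟩ := scaledTail_add hε n m
  obtain ⟨N₀, hN₀⟩ := scaledTail_eq_denom_mul_sub_int hε n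
  set Q := ∏ i ∈ Icc (n + 1) (n + m), q i
  have hQ : 2 ≤ Q := by
    refine (hq (n + 1) (by omega)).trans (single_le_prod' (fun i hi => ?_) ?_)
    · exact one_le_two.trans (hq i ((Nat.le_add_left 1 n).trans (mem_Icc.1 hi).1))
    · exact mem_Icc.2 ⟨le_rfl, by omega⟩
  have hQ' : (Q : ℝ) - 1 ≠ 0 := by
    have : (2 : ℝ) ≤ Q := by exact_mod_cast hQ
    linarith
  have hD : (denom q n : ℝ) ≠ 0 := by exact_mod_cast (denom_pos (pos_of_digit_lt hε) n).ne'
  have hfix : scaledTail q ε n = N / (Q - 1) := by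
    rw [eq_div_iff hQ']
    linarith
  refine ⟨(N / (Q - 1) + N₀) / denom q n, ?_⟩
  push_cast
  rw [← hfix, hN₀]
  field_simp
  ring

end CantorSeries

open CantorSeries in
/-- `x = Σ_{k=1}^∞ ε_k/(q_1 ⋯ q_k)` is rational iff there exist `n ≥ 0`
and `m ≥ 1` such that
`Σ_{k=n+1}^∞ ε_k/(q_1 ⋯ q_k) = (q_{n+1} ⋯ q_{n+m}) · Σ_{k=n+m+1}^∞ ε_k/(q_1 ⋯ q_k)`. -/
theorem cantor_rational_iff_tail_eq
    (q : ℕ → ℕ) (hq : ∀ k, 1 ≤ k → 2 ≤ q k)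
    (ε : ℕ → ℕ) (hε : ∀ k, 1 ≤ k → ε k ≤ q k - 1)
    (x : ℝ) (hx : x = cantorTail q ε 0) :
    (∃ a : ℚ, x = (a : ℝ)) ↔
    (∃ n m : ℕ, 0 < m ∧
      cantorTail q ε n =
        (∏ i ∈ Finset.Icc (n + 1) (n + m), (q i : ℝ)) * cantorTail q ε (n + m)) := by
  have hdigit : ∀ k, 1 ≤ k → ε k < q k := fun k hk => by
    have := hq k hk
    have := hε k hk
    omega
  simp_rw [cantorTail_eq_prod_mul_iff (pos_of_digit_lt hdigit)]
  subst hx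
  constructor
  · rintro ⟨a, ha⟩
    obtain ⟨n₁, n₂, hlt, heq⟩ := exists_lt_scaledTail_eq_of_eq_ratCast hdigit ha
    exact ⟨n₁, n₂ - n₁, by omega, by rwa [Nat.add_sub_cancel' hlt.le]⟩
  · rintro ⟨n, m, hm, heq⟩
    exact exists_ratCast_eq_of_scaledTail_eq hq hdigit hm heq
end

section
/- If σ^n(x) = x for every positive integer n, then ε_n/(q_n − 1) = x for every n ≥ 1; in particular ε_n = x·(q_n − 1) for all n and the ratio ε_n/(q_n − 1) is constant in n. -/
lemma cantor_summable (q : ℕ → ℕ) (hq : ∀ k, 1 ≤ k → 2 ≤ q k)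
    (ε : ℕ → ℕ) (hε : ∀ k, 1 ≤ k → ε k ≤ q k - 1) (m : ℕ) :
    Summable (fun k : ℕ => (ε (m + k + 1) : ℝ) /
      ∏ i ∈ Finset.Icc (m + 1) (m + k + 1), (q i : ℝ)) := by
  have hgeom : Summable (fun k : ℕ => (1 / 2 : ℝ) ^ k) :=
    summable_geometric_of_lt_one (by norm_num) (by norm_num)
  apply Summable.of_nonneg_of_le _ _ hgeom
  · intro k
    positivity
  · intro k
    have hsplit : Finset.Icc (m + 1) (m + k + 1)
        = insert (m + k + 1) (Finset.Icc (m + 1) (m + k)) := by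
      ext i; simp [Finset.mem_Icc]; omega
    have hqpos : ∀ i ∈ Finset.Icc (m + 1) (m + k), (0:ℝ) < (q i : ℝ) := by
      intro i hi
      simp [Finset.mem_Icc] at hi
      have := hq i (by omega)
      positivity
    have hPpos : (0:ℝ) < ∏ i ∈ Finset.Icc (m + 1) (m + k), (q i : ℝ) :=
      Finset.prod_pos hqpos
    have hP : (2:ℝ) ^ k ≤ ∏ i ∈ Finset.Icc (m + 1) (m + k), (q i : ℝ) := by
      have hcard : (Finset.Icc (m + 1) (m + k)).card = k := by
        rw [Nat.card_Icc]; omega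
      calc (2:ℝ) ^ k = ∏ _i ∈ Finset.Icc (m + 1) (m + k), (2:ℝ) := by
              rw [Finset.prod_const, hcard]
        _ ≤ _ := by
              apply Finset.prod_le_prod (fun i _ => by norm_num)
              intro i hi
              simp [Finset.mem_Icc] at hi
              exact_mod_cast hq i (by omega)
    have hqlast : 2 ≤ q (m + k + 1) := hq _ (by omega)
    have hεle : (ε (m + k + 1) : ℝ) ≤ (q (m + k + 1) : ℝ) := by
      have := hε (m + k + 1) (by omega)
      have : ε (m + k + 1) ≤ q (m + k + 1) := by omega
      exact_mod_cast this
    have hqlpos : (0:ℝ) < (q (m + k + 1) : ℝ) := by positivity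
    rw [hsplit, Finset.prod_insert (by simp [Finset.mem_Icc])]
    rw [div_le_iff₀ (by positivity)]
    calc (ε (m + k + 1) : ℝ) ≤ (q (m + k + 1) : ℝ) := hεle
      _ = 1 * (q (m + k + 1) : ℝ) := (one_mul _).symm
      _ ≤ (1/2)^k * (∏ i ∈ Finset.Icc (m + 1) (m + k), (q i : ℝ))
            * (q (m + k + 1) : ℝ) := by
          apply mul_le_mul_of_nonneg_right _ hqlpos.le
          rw [one_div, inv_pow, ← div_eq_inv_mul, le_div_iff₀ (by positivity)]
          simpa using hP
      _ = (1/2)^k * ((q (m + k + 1) : ℝ) * ∏ i ∈ Finset.Icc (m + 1) (m + k), (q i : ℝ)) := by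
          ring

lemma cantor_rec (q : ℕ → ℕ) (hq : ∀ k, 1 ≤ k → 2 ≤ q k)
    (ε : ℕ → ℕ) (hε : ∀ k, 1 ≤ k → ε k ≤ q k - 1) (m : ℕ) :
    cantorShift q ε m = ((ε (m + 1) : ℝ) + cantorShift q ε (m + 1)) / (q (m + 1) : ℝ) := by
  have hqpos : (0:ℝ) < (q (m + 1) : ℝ) := by
    have := hq (m + 1) (by omega); positivity
  have hs := cantor_summable q hq ε hε m
  unfold cantorShift
  rw [Summable.tsum_eq_zero_add hs]
  have h0 : (ε (m + 0 + 1) : ℝ) / ∏ i ∈ Finset.Icc (m + 1) (m + 0 + 1), (q i : ℝ)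
      = (ε (m + 1) : ℝ) / (q (m + 1) : ℝ) := by
    simp
  rw [h0]
  have hterm : ∀ k : ℕ, (ε (m + (k + 1) + 1) : ℝ) /
      ∏ i ∈ Finset.Icc (m + 1) (m + (k + 1) + 1), (q i : ℝ)
      = ((q (m + 1) : ℝ))⁻¹ * ((ε ((m + 1) + k + 1) : ℝ) /
        ∏ i ∈ Finset.Icc ((m + 1) + 1) ((m + 1) + k + 1), (q i : ℝ)) := by
    intro k
    have hsplit : Finset.Icc (m + 1) (m + (k + 1) + 1)
        = insert (m + 1) (Finset.Icc (m + 2) (m + k + 2)) := by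
      ext i; simp [Finset.mem_Icc]; omega
    rw [hsplit, Finset.prod_insert (by simp [Finset.mem_Icc])]
    have h1 : m + (k + 1) + 1 = (m + 1) + k + 1 := by ring
    have h2 : (m + 1) + 1 = m + 2 := by ring
    have h3 : (m + 1) + k + 1 = m + k + 2 := by ring
    rw [h1, h2, h3]
    field_simp
  rw [tsum_congr hterm, tsum_mul_left]
  field_simp

/-- if `σ^n(x) = x` for every `n ≥ 1`, then `ε_n/(q_n − 1) = x` for every
`n ≥ 1`; in particular `ε_n = x·(q_n − 1)` for all such `n`. -/
theorem cantor_shift_fixed_digits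
    (q : ℕ → ℕ) (hq : ∀ k, 1 ≤ k → 2 ≤ q k)
    (ε : ℕ → ℕ) (hε : ∀ k, 1 ≤ k → ε k ≤ q k - 1)
    (x : ℝ) (hx : x = cantorShift q ε 0)
    (hfix : ∀ n : ℕ, 1 ≤ n → cantorShift q ε n = x) :
    ∀ n : ℕ, 1 ≤ n →
      (ε n : ℝ) / ((q n : ℝ) - 1) = x ∧ (ε n : ℝ) = x * ((q n : ℝ) - 1) := by
  intro n hn
  obtain ⟨m, rfl⟩ : ∃ m, n = m + 1 := ⟨n - 1, by omega⟩
  have hrec := cantor_rec q hq ε hε m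
  have hL : cantorShift q ε m = x := by
    rcases Nat.eq_zero_or_pos m with rfl | hm
    · exact hx.symm
    · exact hfix m hm
  have hR : cantorShift q ε (m + 1) = x := hfix (m + 1) (by omega)
  rw [hL, hR] at hrec
  have hq2 : 2 ≤ q (m + 1) := hq (m + 1) (by omega)
  have hqR : (2:ℝ) ≤ (q (m + 1) : ℝ) := by exact_mod_cast hq2
  have hne : (q (m + 1) : ℝ) - 1 ≠ 0 := by linarith
  have heq : (ε (m + 1) : ℝ) = x * ((q (m + 1) : ℝ) - 1) := by
    field_simp at hrec
    linarith [hrec]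
  exact ⟨by rw [heq]; field_simp, heq⟩
end

section
/- Let n₀ be a fixed positive integer. Then there exists a real constant c such that σ^n(x) = c for all n ≥ n₀ if and only if there exists a real constant p such that ε_n/(q_n − 1) = p for all n > n₀; moreover, in that case c = p. -/
open Finset Filter Topology

theorem hasSum_sub_succ_of_antitone {f : ℕ → ℝ} {a : ℝ} (hf : Antitone f)
    (ha : Tendsto f atTop (𝓝 a)) : HasSum (fun n ↦ f n - f (n + 1)) (f 0 - a) := by
  rw [hasSum_iff_tendsto_nat_of_nonneg fun n ↦ sub_nonneg.2 (hf n.le_succ)]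
  simpa only [sum_range_sub'] using tendsto_const_nhds.sub ha

noncomputable def basesProd (q : ℕ → ℕ) (n k : ℕ) : ℝ :=
  ∏ i ∈ Icc (n + 1) (n + k), (q i : ℝ)

namespace basesProd

variable {q : ℕ → ℕ} {n k : ℕ}

theorem zero : basesProd q n 0 = 1 := by
  simp [basesProd]

theorem succ : basesProd q n (k + 1) = basesProd q n k * q (n + k + 1) := by
  rw [basesProd, basesProd, ← add_assoc]
  exact prod_Icc_succ_top (by omega) _

theorem succ' : basesProd q n (k + 1) = q (n + 1) * basesProd q (n + 1) k := by
  rw [basesProd, basesProd, ← insert_Icc_add_one_left_eq_Icc (by omega),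
    prod_insert (by simp), show n + (k + 1) = n + 1 + k by omega]

variable (hq : ∀ k, 1 ≤ k → 2 ≤ q k)
include hq

theorem two_pow_le : (2 : ℝ) ^ k ≤ basesProd q n k := by
  induction k with
  | zero => simp [zero]
  | succ k ih =>
    rw [pow_succ, succ]
    have : (2 : ℝ) ≤ q (n + k + 1) := by exact_mod_cast hq _ (by omega)
    exact mul_le_mul ih this zero_le_two ((pow_nonneg zero_le_two k).trans ih)

theorem pos : 0 < basesProd q n k :=
  (pow_pos two_pos k).trans_le (two_pow_le hq)

theorem antitone_inv : Antitone fun k ↦ (basesProd q n k)⁻¹ := by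
  refine antitone_nat_of_succ_le fun k ↦ inv_anti₀ (pos hq) ?_
  rw [succ]
  have : (1 : ℝ) ≤ q (n + k + 1) := by exact_mod_cast (hq _ (by omega)).trans' one_le_two
  exact le_mul_of_one_le_right (pos hq).le this

theorem tendsto_inv : Tendsto (fun k ↦ (basesProd q n k)⁻¹) atTop (𝓝 0) :=
  tendsto_inv_atTop_zero.comp <| tendsto_atTop_mono (fun _ ↦ two_pow_le hq)
    (tendsto_pow_atTop_atTop_of_one_lt one_lt_two)

theorem hasSum_inv_sub_inv_succ :
    HasSum (fun k ↦ (basesProd q n k)⁻¹ - (basesProd q n (k + 1))⁻¹) 1 := by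
  simpa [zero] using hasSum_sub_succ_of_antitone (antitone_inv hq) (tendsto_inv hq (n := n))

theorem mul_sub_one_div_succ (x : ℝ) :
    x * ((q (n + k + 1) : ℝ) - 1) / basesProd q n (k + 1)
      = x * ((basesProd q n k)⁻¹ - (basesProd q n (k + 1))⁻¹) := by
  have hP := (pos hq (n := n) (k := k)).ne'
  have hqk : (q (n + k + 1) : ℝ) ≠ 0 := by exact_mod_cast (hq _ (by omega)).trans_lt' two_pos |>.ne'
  rw [succ]
  field_simp

end basesProd

section

variable {q ε : ℕ → ℕ} {n : ℕ}

theorem cantorShift_eq_tsum :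
    cantorShift q ε n = ∑' k, (ε (n + k + 1) : ℝ) / basesProd q n (k + 1) :=
  rfl

theorem summable_cantorShift_terms (hq : ∀ k, 1 ≤ k → 2 ≤ q k) (hε : ∀ k, 1 ≤ k → ε k ≤ q k - 1)
    (n : ℕ) : Summable fun k ↦ (ε (n + k + 1) : ℝ) / basesProd q n (k + 1) := by
  refine (basesProd.hasSum_inv_sub_inv_succ hq (n := n)).summable.of_nonneg_of_le
    (fun k ↦ div_nonneg (Nat.cast_nonneg _) (basesProd.pos hq).le) fun k ↦ ?_
  have hεk : (ε (n + k + 1) : ℝ) ≤ 1 * ((q (n + k + 1) : ℝ) - 1) := by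
    have := hε (n + k + 1) (by omega)
    have := hq (n + k + 1) (by omega)
    rw [one_mul, le_sub_iff_add_le]
    exact_mod_cast (by omega : ε (n + k + 1) + 1 ≤ q (n + k + 1))
  exact (div_le_div_of_nonneg_right hεk (basesProd.pos hq).le).trans_eq
    (by rw [basesProd.mul_sub_one_div_succ hq, one_mul])

theorem cantorShift_eq_add_div (hq : ∀ k, 1 ≤ k → 2 ≤ q k)
    (hε : ∀ k, 1 ≤ k → ε k ≤ q k - 1) (n : ℕ) :
    cantorShift q ε n = ((ε (n + 1) : ℝ) + cantorShift q ε (n + 1)) / q (n + 1) := by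
  rw [cantorShift_eq_tsum, (summable_cantorShift_terms hq hε n).tsum_eq_zero_add, cantorShift_eq_tsum,
    add_div, ← tsum_div_const]
  congr 1
  · simp [basesProd.succ, basesProd.zero]
  · congr 1 with k
    rw [basesProd.succ', div_div, mul_comm, show n + (k + 1) + 1 = n + 1 + k + 1 by omega]

theorem ratio_eq_of_cantorShift_eq (hq : ∀ k, 1 ≤ k → 2 ≤ q k)
    (hε : ∀ k, 1 ≤ k → ε k ≤ q k - 1) {c : ℝ} (hn : cantorShift q ε n = c)
    (hn' : cantorShift q ε (n + 1) = c) : (ε (n + 1) : ℝ) / ((q (n + 1) : ℝ) - 1) = c := by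
  have h := cantorShift_eq_add_div hq hε n
  have : (2 : ℝ) ≤ q (n + 1) := by exact_mod_cast hq _ (by omega)
  rw [hn, hn', eq_div_iff (by linarith)] at h
  rw [div_eq_iff (by linarith)]
  linarith

theorem cantorShift_eq_of_ratio_eq (hq : ∀ k, 1 ≤ k → 2 ≤ q k) {p : ℝ}
    (h : ∀ k, (ε (n + k + 1) : ℝ) / ((q (n + k + 1) : ℝ) - 1) = p) : cantorShift q ε n = p := by
  have hε : ∀ k, (ε (n + k + 1) : ℝ) = p * ((q (n + k + 1) : ℝ) - 1) := fun k ↦ by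
    have : (2 : ℝ) ≤ q (n + k + 1) := by exact_mod_cast hq _ (by omega)
    rw [← h k, div_mul_cancel₀ _ (by linarith)]
  simp only [cantorShift_eq_tsum, hε, basesProd.mul_sub_one_div_succ hq]
  simpa using ((basesProd.hasSum_inv_sub_inv_succ hq).mul_left p).tsum_eq

end

theorem cantor_shift_const_iff_ratio_const_general
    (q : ℕ → ℕ) (hq : ∀ k, 1 ≤ k → 2 ≤ q k)
    (ε : ℕ → ℕ) (hε : ∀ k, 1 ≤ k → ε k ≤ q k - 1)
    (n₀ : ℕ) :
    ((∃ c : ℝ, ∀ n : ℕ, n₀ ≤ n → cantorShift q ε n = c) ↔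
      (∃ p : ℝ, ∀ n : ℕ, n₀ < n → (ε n : ℝ) / ((q n : ℝ) - 1) = p)) ∧
    (∀ c p : ℝ, (∀ n : ℕ, n₀ ≤ n → cantorShift q ε n = c) →
      (∀ n : ℕ, n₀ < n → (ε n : ℝ) / ((q n : ℝ) - 1) = p) → c = p) := by
  have ratio_of_shift (c : ℝ) (hc : ∀ n, n₀ ≤ n → cantorShift q ε n = c) (n : ℕ) (hn : n₀ < n) :
      (ε n : ℝ) / ((q n : ℝ) - 1) = c := by
    obtain ⟨m, rfl⟩ : ∃ m, n = m + 1 := ⟨n - 1, by omega⟩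
    exact ratio_eq_of_cantorShift_eq hq hε (hc m (by omega)) (hc (m + 1) hn.le)
  have shift_of_ratio (p : ℝ) (hp : ∀ n, n₀ < n → (ε n : ℝ) / ((q n : ℝ) - 1) = p) (n : ℕ)
      (hn : n₀ ≤ n) : cantorShift q ε n = p :=
    cantorShift_eq_of_ratio_eq hq fun k ↦ hp _ (by omega)
  refine ⟨⟨fun ⟨c, hc⟩ ↦ ⟨c, ratio_of_shift c hc⟩, fun ⟨p, hp⟩ ↦ ⟨p, shift_of_ratio p hp⟩⟩, ?_⟩
  intro c p hc hp
  exact (ratio_of_shift c hc (n₀ + 1) n₀.lt_succ_self).symm.trans (hp _ n₀.lt_succ_self)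

/-- for a fixed positive integer `n₀`, the shifts `σ^n(x)` are constant
for all `n ≥ n₀` iff the ratios `ε_n/(q_n − 1)` are constant for all `n > n₀`;
moreover, in that case the two constants coincide. -/
theorem cantor_shift_const_iff_ratio_const
    (q : ℕ → ℕ) (hq : ∀ k, 1 ≤ k → 2 ≤ q k)
    (ε : ℕ → ℕ) (hε : ∀ k, 1 ≤ k → ε k ≤ q k - 1)
    (x : ℝ) (hx : x = cantorShift q ε 0)
    (n₀ : ℕ) (hn₀ : 1 ≤ n₀) :
    ((∃ c : ℝ, ∀ n : ℕ, n₀ ≤ n → cantorShift q ε n = c) ↔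
      (∃ p : ℝ, ∀ n : ℕ, n₀ < n → (ε n : ℝ) / ((q n : ℝ) - 1) = p)) ∧
    (∀ c p : ℝ, (∀ n : ℕ, n₀ ≤ n → cantorShift q ε n = c) →
      (∀ n : ℕ, n₀ < n → (ε n : ℝ) / ((q n : ℝ) - 1) = p) → c = p) :=
  cantor_shift_const_iff_ratio_const_general q hq ε hε n₀
end
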